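/- Let μ, π be probability distributions on a finite alphabet with full support and μ ≠ π, and let S, S' be distinct nonempty subsets of {1,…,M}. Setting a = |S∩S'|, b = |S∖S'|, c = |S'∖S|, d = |Sᶜ∩S'ᶜ|, the quantity a·D(μ‖(aμ+cπ)/(a+c)) + b·D(μ‖(bμ+dπ)/(b+d)) + c·D(π‖(aμ+cπ)/(a+c)) + d·D(π‖(bμ+dπ)/(b+d)) is strictly positive, provided |S| < M/2 and |S'| < M/2 (so that d ≥ 1), where terms with zero denominator (a+c = 0 or b+d = 0) are interpreted as 0. -/
import Mathlib

open Finset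
open scoped Classical

/-- `p` is a probability mass function on the finite alphabet `Y`. -/
def IsPMF {Y : Type*} [Fintype Y] (p : Y → ℝ) : Prop :=
  (∀ y, 0 ≤ p y) ∧ ∑ y, p y = 1

/-- Relative entropy (KL divergence), with the convention `0 log 0 = 0`
(automatic since `0 * log _ = 0` in `ℝ`). -/
noncomputable def KL {Y : Type*} [Fintype Y] (p q : Y → ℝ) : ℝ :=
  ∑ y, p y * Real.log (p y / q y)

lemma point_le (p q : ℝ) (hp : 0 < p) (hq : 0 < q) : p - q ≤ p * Real.log (p / q) := by
  have h := Real.log_le_sub_one_of_pos (div_pos hq hp)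
  rw [Real.log_div hq.ne' hp.ne'] at h
  rw [Real.log_div hp.ne' hq.ne']
  have h2 : q / p * p = q := div_mul_cancel₀ _ hp.ne'
  nlinarith [mul_le_mul_of_nonneg_right h hp.le]

lemma point_lt (p q : ℝ) (hp : 0 < p) (hq : 0 < q) (hne : p ≠ q) :
    p - q < p * Real.log (p / q) := by
  have hne' : q / p ≠ 1 := by
    intro h; apply hne; field_simp at h; linarith
  have h := Real.log_lt_sub_one_of_pos (div_pos hq hp) hne'
  rw [Real.log_div hq.ne' hp.ne'] at h
  rw [Real.log_div hp.ne' hq.ne']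
  have h2 : q / p * p = q := div_mul_cancel₀ _ hp.ne'
  nlinarith [mul_lt_mul_of_pos_right h hp]

lemma KL_nonneg' {Y : Type*} [Fintype Y] (p q : Y → ℝ) (hp : ∀ y, 0 < p y)
    (hq : ∀ y, 0 < q y) (hps : ∑ y, p y = 1) (hqs : ∑ y, q y = 1) : 0 ≤ KL p q := by
  have h : ∑ y, (p y - q y) ≤ KL p q :=
    Finset.sum_le_sum fun y _ => point_le _ _ (hp y) (hq y)
  rw [Finset.sum_sub_distrib, hps, hqs] at h
  linarith

lemma KL_pos' {Y : Type*} [Fintype Y] (p q : Y → ℝ) (hp : ∀ y, 0 < p y)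
    (hq : ∀ y, 0 < q y) (hps : ∑ y, p y = 1) (hqs : ∑ y, q y = 1)
    (hne : p ≠ q) : 0 < KL p q := by
  obtain ⟨y₀, hy₀⟩ := Function.ne_iff.mp hne
  have h : ∑ y, (p y - q y) < KL p q := by
    refine Finset.sum_lt_sum (fun y _ => point_le _ _ (hp y) (hq y)) ⟨y₀, Finset.mem_univ _, ?_⟩
    exact point_lt _ _ (hp y₀) (hq y₀) hy₀
  rw [Finset.sum_sub_distrib, hps, hqs] at h
  linarith

section Mix
variable {Y : Type*} [Fintype Y] (μ π : Y → ℝ)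

lemma mix_pos (hμpos : ∀ y, 0 < μ y) (hπpos : ∀ y, 0 < π y) (a c : ℝ)
    (ha : 0 ≤ a) (hc : 0 ≤ c) (hac : 0 < a + c) (y : Y) :
    0 < (a * μ y + c * π y) / (a + c) := by
  apply div_pos _ hac
  have hm : 0 < min (μ y) (π y) := lt_min (hμpos y) (hπpos y)
  have h1 : a * min (μ y) (π y) ≤ a * μ y := mul_le_mul_of_nonneg_left (min_le_left _ _) ha
  have h2 : c * min (μ y) (π y) ≤ c * π y := mul_le_mul_of_nonneg_left (min_le_right _ _) hc
  nlinarith [mul_pos hac hm]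

lemma mix_sum (hμ : ∑ y, μ y = 1) (hπ : ∑ y, π y = 1) (a c : ℝ) (hac : a + c ≠ 0) :
    ∑ y, (a * μ y + c * π y) / (a + c) = 1 := by
  rw [← Finset.sum_div, Finset.sum_add_distrib, ← Finset.mul_sum, ← Finset.mul_sum,
    hμ, hπ, mul_one, mul_one, div_self hac]

lemma mix_ne_pi (hne : μ ≠ π) (a c : ℝ) (ha : 0 < a) (hac : a + c ≠ 0) :
    (fun y => (a * μ y + c * π y) / (a + c)) ≠ π := by
  intro h
  apply hne
  funext y
  have h1 := congrFun h y
  simp only [div_eq_iff hac] at h1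
  have h2 : a * μ y = a * π y := by linear_combination h1
  exact mul_left_cancel₀ ha.ne' h2

end Mix

theorem alphaBarS_pos {Y : Type*} [Fintype Y] (μ π : Y → ℝ)
    (hμ : IsPMF μ) (hπ : IsPMF π) (hμpos : ∀ y, 0 < μ y) (hπpos : ∀ y, 0 < π y)
    (hne : μ ≠ π) (M : ℕ) (hM : 3 ≤ M) (S S' : Finset (Fin M))
    (hS : S.Nonempty) (hS' : S'.Nonempty) (hSS' : S ≠ S')
    (hScard : 2 * S.card < M) (hS'card : 2 * S'.card < M) :
    0 < ((S ∩ S').card : ℝ) *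
          KL μ (fun y => (((S ∩ S').card : ℝ) * μ y + ((S' \ S).card : ℝ) * π y)
            / (((S ∩ S').card : ℝ) + ((S' \ S).card : ℝ)))
        + ((S \ S').card : ℝ) *
          KL μ (fun y => (((S \ S').card : ℝ) * μ y + ((Sᶜ ∩ S'ᶜ).card : ℝ) * π y)
            / (((S \ S').card : ℝ) + ((Sᶜ ∩ S'ᶜ).card : ℝ)))
        + ((S' \ S).card : ℝ) *
          KL π (fun y => (((S ∩ S').card : ℝ) * μ y + ((S' \ S).card : ℝ) * π y)
            / (((S ∩ S').card : ℝ) + ((S' \ S).card : ℝ)))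
        + ((Sᶜ ∩ S'ᶜ).card : ℝ) *
          KL π (fun y => (((S \ S').card : ℝ) * μ y + ((Sᶜ ∩ S'ᶜ).card : ℝ) * π y)
            / (((S \ S').card : ℝ) + ((Sᶜ ∩ S'ᶜ).card : ℝ))) := by
  set A : ℝ := ((S ∩ S').card : ℝ) with hA
  set B : ℝ := ((S \ S').card : ℝ) with hB
  set C : ℝ := ((S' \ S).card : ℝ) with hC
  set D : ℝ := ((Sᶜ ∩ S'ᶜ).card : ℝ) with hD
  have hA0 : 0 ≤ A := Nat.cast_nonneg _
  have hB0 : 0 ≤ B := Nat.cast_nonneg _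
  have hC0 : 0 ≤ C := Nat.cast_nonneg _
  have hD0 : 0 ≤ D := Nat.cast_nonneg _
  -- A + C = |S'| ≥ 1
  have hACnat : (S ∩ S').card + (S' \ S).card = S'.card := by
    rw [Finset.inter_comm]; exact Finset.card_inter_add_card_sdiff S' S
  have hAC : 0 < A + C := by
    have h1 : 0 < (S ∩ S').card + (S' \ S).card := by
      rw [hACnat]; exact Finset.card_pos.mpr hS'
    have h2 : (0:ℝ) < ((S ∩ S').card : ℝ) + ((S' \ S).card : ℝ) := by exact_mod_cast h1
    rw [hA, hC]; exact h2
  -- D ≥ 1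
  have hDnat : 1 ≤ (Sᶜ ∩ S'ᶜ).card := by
    have h1 : Sᶜ ∩ S'ᶜ = (S ∪ S')ᶜ := (Finset.compl_union S S').symm
    rw [h1, Finset.card_compl, Fintype.card_fin]
    have h2 : (S ∪ S').card ≤ S.card + S'.card := Finset.card_union_le S S'
    omega
  have hD1 : (1 : ℝ) ≤ D := by rw [hD]; exact_mod_cast hDnat
  have hBD : 0 < B + D := by linarith
  -- common facts
  have hμs := hμ.2
  have hπs := hπ.2
  have hq1pos := mix_pos μ π hμpos hπpos A C hA0 hC0 hAC
  have hq2pos := mix_pos μ π hμpos hπpos B D hB0 hD0 hBD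
  have hq1sum := mix_sum μ π hμs hπs A C hAC.ne'
  have hq2sum := mix_sum μ π hμs hπs B D hBD.ne'
  have hT1 : 0 ≤ A * KL μ (fun y => (A * μ y + C * π y) / (A + C)) :=
    mul_nonneg hA0 (KL_nonneg' μ _ hμpos hq1pos hμs hq1sum)
  have hT2 : 0 ≤ B * KL μ (fun y => (B * μ y + D * π y) / (B + D)) :=
    mul_nonneg hB0 (KL_nonneg' μ _ hμpos hq2pos hμs hq2sum)
  have hT3 : 0 ≤ C * KL π (fun y => (A * μ y + C * π y) / (A + C)) :=
    mul_nonneg hC0 (KL_nonneg' π _ hπpos hq1pos hπs hq1sum)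
  have hT4 : 0 ≤ D * KL π (fun y => (B * μ y + D * π y) / (B + D)) :=
    mul_nonneg hD0 (KL_nonneg' π _ hπpos hq2pos hπs hq2sum)
  rcases Nat.eq_zero_or_pos (S \ S').card with hb | hb
  · -- S ⊆ S', so C > 0 and A > 0; third term positive
    have hsub : S ⊆ S' := by
      rwa [← Finset.sdiff_eq_empty_iff_subset, ← Finset.card_eq_zero]
    have hCpos : 0 < C := by
      rw [hC]
      have : (S' \ S).Nonempty := by
        rw [Finset.sdiff_nonempty]
        intro h
        exact hSS' (Finset.Subset.antisymm hsub h)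
      exact_mod_cast Finset.card_pos.mpr this
    have hApos : 0 < A := by
      rw [hA]
      have : (S ∩ S').Nonempty := by
        rw [Finset.inter_eq_left.mpr hsub]; exact hS
      exact_mod_cast Finset.card_pos.mpr this
    have hT3' : 0 < C * KL π (fun y => (A * μ y + C * π y) / (A + C)) := by
      apply mul_pos hCpos
      apply KL_pos' π _ hπpos hq1pos hπs hq1sum
      exact fun h => (mix_ne_pi μ π hne A C hApos hAC.ne') h.symm
    linarith
  · -- B > 0; fourth term positive
    have hBpos : 0 < B := by rw [hB]; exact_mod_cast hb
    have hT4' : 0 < D * KL π (fun y => (B * μ y + D * π y) / (B + D)) := by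
      apply mul_pos (by linarith)
      apply KL_pos' π _ hπpos hq2pos hπs hq2sum
      exact fun h => (mix_ne_pi μ π hne B D hBpos hBD.ne') h.symm
    linarith
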